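/- arXiv:2106.12786 — 2 statements merged into one kernel-verified Lean document; each statement's English description precedes it below -/
import Mathlib

section
/- For every integer k ≥ 0, the space P_{k+1}(ℝ³;ℝ³) is the internal direct sum of the subspace { x ↦ τ(x)·x : τ ∈ P_k(ℝ³;𝕊) } and the subspace RM; that is, these two subspaces intersect only in 0 and together span P_{k+1}(ℝ³;ℝ³). -/
open Matrix

noncomputable section

abbrev V3 : Type := Fin 3 → ℝ
abbrev M3 : Type := Matrix (Fin 3) (Fin 3) ℝ

/-- The Levi-Civita symbol `ε i j k` on `Fin 3`. -/
def eps (i j k : Fin 3) : ℝ :=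
  ((((j : ℤ) - (i : ℤ)) * ((k : ℤ) - (j : ℤ)) * ((k : ℤ) - (i : ℤ)) : ℤ) : ℝ) / 2

/-- Partial derivative `∂ᵢ f`. -/
def pd (i : Fin 3) (f : V3 → ℝ) : V3 → ℝ :=
  fun x => fderiv ℝ f x (Pi.single i 1)

/-- Cross product of vectors in `ℝ³`. -/
def vcross (a b : V3) : V3 := fun i => ∑ k, ∑ l, eps i k l * a k * b l

/-- Symmetric part of a matrix, `sym B = (B + Bᵀ)/2`. -/
def symMat (B : M3) : M3 := (2:ℝ)⁻¹ • (B + Bᵀ)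

/-- `(∇v)_{ij} = ∂ᵢ v_j`. -/
def gradv (v : V3 → V3) : V3 → M3 :=
  fun x => Matrix.of fun i j => pd i (fun y => v y j) x

/-- Symmetric gradient (deformation) `def v = (∇v + (∇v)ᵀ)/2`. -/
def defv (v : V3 → V3) : V3 → M3 := fun x => symMat (gradv v x)

/-- Column-wise curl `(∇×A)_{ij} = Σ_{s,t} ε_{ist} ∂_s A_{tj}`. -/
def colCurl (A : V3 → M3) : V3 → M3 :=
  fun x => Matrix.of fun i j => ∑ s, ∑ t, eps i s t * pd s (fun y => A y t j) x

/-- Row-wise curl `(A×∇)_{ij} = Σ_{k,l} ε_{jkl} ∂_l A_{ik}`. -/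
def rowCurl (A : V3 → M3) : V3 → M3 :=
  fun x => Matrix.of fun i j => ∑ k, ∑ l, eps j k l * pd l (fun y => A y i k) x

/-- Incompatibility operator `inc A = ∇×(A×∇)`. -/
def incOp (A : V3 → M3) : V3 → M3 := colCurl (rowCurl A)

/-- Row-wise divergence `(div A)_i = Σ_j ∂_j A_{ij}`. -/
def divRow (A : V3 → M3) : V3 → V3 :=
  fun x i => ∑ j, pd j (fun y => A y i j) x

/-- Curl of a vector field. -/
def curlVec (w : V3 → V3) : V3 → V3 :=
  fun x i => ∑ s, ∑ t, eps i s t * pd s (fun y => w y t) x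

/-- `(b×A)_{ij} = Σ_{k,l} ε_{ikl} b_k A_{lj}`. -/
def bCrossA (b : V3) (A : M3) : M3 :=
  Matrix.of fun i j => ∑ k, ∑ l, eps i k l * b k * A l j

/-- `(A×b)_{ij} = Σ_{k,l} ε_{jkl} A_{ik} b_l`. -/
def aCrossB (A : M3) (b : V3) : M3 :=
  Matrix.of fun i j => ∑ k, ∑ l, eps j k l * A i k * b l

/-- `f : ℝ³ → ℝ` is a polynomial map of total degree at most `m` (`m : ℤ`, so
`m < 0` forces `f = 0` since the zero polynomial has empty support). -/
def PolyDeg (m : ℤ) (f : V3 → ℝ) : Prop :=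
  ∃ p : MvPolynomial (Fin 3) ℝ,
    (∀ d ∈ p.support, ((∑ i, d i : ℕ) : ℤ) ≤ m) ∧ f = fun x => MvPolynomial.eval x p

/-- `P_m(ℝ³;ℝ³)`. -/
def PolyVec (m : ℤ) (v : V3 → V3) : Prop := ∀ i, PolyDeg m fun x => v x i

/-- `P_m(ℝ³;𝕄)`. -/
def PolyMat (m : ℤ) (A : V3 → M3) : Prop := ∀ i j, PolyDeg m fun x => A x i j

/-- `P_m(ℝ³;𝕊)`: polynomial symmetric-matrix-valued maps of degree at most `m`. -/
def PolySym (m : ℤ) (A : V3 → M3) : Prop := PolyMat m A ∧ ∀ x, (A x)ᵀ = A x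

/-!
The sum is direct because a field `x ↦ τ(x) x` with `τ` continuous and symmetric vanishes at `0`
and its derivative there is the symmetric matrix `τ(0)`, whereas `x ↦ a × x + b` takes the value
`b` at `0` and has the skew derivative `x ↦ a × x`.

For the spanning it suffices to treat the monomial fields `x^d e_r`. With
`S(u, v) = u vᵀ + v uᵀ` the polarization identity
`(v⬝x)(w⬝x) u = ½ ((w⬝x) S(u, v) + (v⬝x) S(u, w) - (u⬝x) S(v, w)) x`
writes every monomial field of degree `≥ 2` as `τ(x) x` with `τ` symmetric of one degree less.
In degree one `(v⬝x) u = ½ S(u, v) x + ½ (v × u) × x`, and constants are rigid motions.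
-/

open MvPolynomial

def polyFun (m : ℕ) : Submodule ℝ (V3 → ℝ) :=
  (restrictTotalDegree (Fin 3) ℝ m).map (evalₗ ℝ (Fin 3))

lemma mem_polyFun {m : ℕ} {f : V3 → ℝ} :
    f ∈ polyFun m ↔
      ∃ p : MvPolynomial (Fin 3) ℝ, p.totalDegree ≤ m ∧ f = fun x => eval x p := by
  simp [polyFun, mem_restrictTotalDegree, eq_comm, funext_iff]

lemma polyDeg_iff_mem_polyFun {m : ℕ} {f : V3 → ℝ} : PolyDeg m f ↔ f ∈ polyFun m := by
  simp only [PolyDeg, mem_polyFun, totalDegree, Finset.sup_le_iff, ← Finsupp.degree_eq_sum]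
  norm_cast

lemma polyFun_mono {m n : ℕ} (h : m ≤ n) : polyFun m ≤ polyFun n := by
  intro f hf
  obtain ⟨p, hp, rfl⟩ := mem_polyFun.mp hf
  exact mem_polyFun.mpr ⟨p, hp.trans h, rfl⟩

lemma const_mem_polyFun (c : ℝ) : (fun _ => c) ∈ polyFun 0 :=
  mem_polyFun.mpr ⟨C c, by simp, by simp⟩

lemma dotProduct_mem_polyFun (w : V3) : (fun x => w ⬝ᵥ x) ∈ polyFun 1 := by
  refine mem_polyFun.mpr ⟨∑ i, C (w i) * X i, ?_, ?_⟩
  · refine (totalDegree_finsetSum _ _).trans (Finset.sup_le fun i _ => ?_)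
    exact (totalDegree_mul _ _).trans (by simp)
  · ext x
    simp [dotProduct]

lemma mul_mem_polyFun {m n : ℕ} {f g : V3 → ℝ} (hf : f ∈ polyFun m) (hg : g ∈ polyFun n) :
    f * g ∈ polyFun (m + n) := by
  obtain ⟨p, hp, rfl⟩ := mem_polyFun.mp hf
  obtain ⟨q, hq, rfl⟩ := mem_polyFun.mp hg
  exact mem_polyFun.mpr ⟨p * q, (totalDegree_mul p q).trans (add_le_add hp hq), by ext; simp⟩

lemma monomial_mem_polyFun (d : Fin 3 →₀ ℕ) :
    (fun x => eval x (monomial d 1)) ∈ polyFun d.degree :=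
  mem_polyFun.mpr ⟨_, (totalDegree_monomial_le d 1).trans_eq
    (by simp [Finsupp.degree_apply, Finsupp.sum]), rfl⟩

lemma polyFun_le_of_monomial_mem {m : ℕ} {S : Submodule ℝ (V3 → ℝ)}
    (h : ∀ d : Fin 3 →₀ ℕ, d.degree ≤ m → (fun x => eval x (monomial d 1)) ∈ S) :
    polyFun m ≤ S := by
  intro f hf
  obtain ⟨p, hp, rfl⟩ := mem_polyFun.mp hf
  have hsum : (fun x => eval x p) =
      ∑ d ∈ p.support, coeff d p • fun x => eval x (monomial d 1) := by
    ext x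
    rw [eval_eq']
    simp [eval_monomial]
  rw [hsum]
  refine Submodule.sum_mem _ fun d hd => Submodule.smul_mem _ _ (h d ?_)
  exact (le_totalDegree hd).trans hp

lemma PolyDeg.mono {m n : ℤ} {f : V3 → ℝ} (hf : PolyDeg m f) (h : m ≤ n) : PolyDeg n f := by
  obtain ⟨p, hp, rfl⟩ := hf
  exact ⟨p, fun d hd => (hp d hd).trans h, rfl⟩

lemma PolySym.mono {m n : ℤ} {τ : V3 → M3} (hτ : PolySym m τ) (h : m ≤ n) : PolySym n τ :=
  ⟨fun i j => (hτ.1 i j).mono h, hτ.2⟩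

lemma PolyDeg.continuous {m : ℤ} {f : V3 → ℝ} (hf : PolyDeg m f) : Continuous f := by
  obtain ⟨p, -, rfl⟩ := hf
  exact continuous_eval p

lemma PolySym.continuous {m : ℤ} {τ : V3 → M3} (hτ : PolySym m τ) : Continuous τ :=
  continuous_pi fun i => continuous_pi fun j => (hτ.1 i j).continuous

lemma polyVec_iff_mem_polyFun {m : ℕ} {f : V3 → V3} :
    PolyVec m f ↔ ∀ i, (fun x => f x i) ∈ polyFun m := by
  simp only [PolyVec, polyDeg_iff_mem_polyFun]

lemma PolyVec.mem_of_monomial_smul_single_mem {m : ℕ} {S : Submodule ℝ (V3 → V3)}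
    (h : ∀ (d : Fin 3 →₀ ℕ) (r : Fin 3), d.degree ≤ m →
      (fun x => eval x (monomial d 1) • Pi.single r 1) ∈ S)
    {f : V3 → V3} (hf : PolyVec m f) : f ∈ S := by
  have hsum : f = ∑ r, fun x => f x r • (Pi.single r 1 : V3) := by
    ext x i
    simp [Finset.sum_apply, Pi.single_apply]
  rw [hsum]
  refine Submodule.sum_mem _ fun r _ => ?_
  let L : (V3 → ℝ) →ₗ[ℝ] V3 → V3 :=
    LinearMap.pi fun x => (LinearMap.proj x).smulRight (Pi.single r 1)
  have hle : polyFun m ≤ S.comap L := polyFun_le_of_monomial_mem fun d hd => h d r hd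
  exact hle (polyDeg_iff_mem_polyFun.mp (hf r))

lemma polyVec_mulVec_self {m : ℕ} {τ : V3 → M3} (hτ : PolySym m τ) :
    PolyVec (m + 1 : ℕ) fun x => τ x *ᵥ x := by
  refine polyVec_iff_mem_polyFun.mpr fun i => ?_
  have h : (fun x => (τ x *ᵥ x) i) =
      ∑ j, (fun x => τ x i j) * fun x => Pi.single j 1 ⬝ᵥ x := by
    ext x
    simp [mulVec, dotProduct, Pi.single_apply]
  rw [h]
  exact Submodule.sum_mem _ fun j _ => mul_mem_polyFun
    (polyDeg_iff_mem_polyFun.mp (hτ.1 i j)) (dotProduct_mem_polyFun _)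

lemma polyVec_cross_add (m : ℕ) (a b : V3) : PolyVec (m + 1 : ℕ) fun x => a ⨯₃ x + b := by
  refine polyVec_iff_mem_polyFun.mpr fun i => ?_
  have h : (fun x => (a ⨯₃ x + b) i) =
      (fun x => (Pi.single i 1 ⨯₃ a) ⬝ᵥ x) + fun _ => b i := by
    ext x
    rw [Pi.add_apply, Pi.add_apply, dotProduct_comm, ← triple_product_permutation,
      ← triple_product_permutation, single_dotProduct, one_mul]
  rw [h]
  exact polyFun_mono (by omega) (Submodule.add_mem _ (dotProduct_mem_polyFun _)
    (polyFun_mono (Nat.zero_le 1) (const_mem_polyFun _)))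

def symOuter (u v : V3) : M3 := vecMulVec u v + vecMulVec v u

lemma symOuter_transpose (u v : V3) : (symOuter u v)ᵀ = symOuter u v := by
  simp [symOuter, transpose_vecMulVec, add_comm]

lemma symOuter_mulVec (u v x : V3) : symOuter u v *ᵥ x = (v ⬝ᵥ x) • u + (u ⬝ᵥ x) • v := by
  simp [symOuter, add_mulVec, vecMulVec_mulVec]

lemma exists_polySym_mulVec_eq {n : ℕ} {g : V3 → ℝ} (hg : g ∈ polyFun n) (u v w : V3) :
    ∃ τ : V3 → M3, PolySym (n + 1 : ℕ) τ ∧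
      (fun x => (g x * (v ⬝ᵥ x) * (w ⬝ᵥ x)) • u) = fun x => τ x *ᵥ x := by
  refine ⟨fun x => (g x / 2) • ((w ⬝ᵥ x) • symOuter u v + (v ⬝ᵥ x) • symOuter u w
    - (u ⬝ᵥ x) • symOuter v w), ⟨fun i j => ?_, fun x => ?_⟩, ?_⟩
  · set z : V3 :=
      (2⁻¹ : ℝ) • (symOuter u v i j • w + symOuter u w i j • v - symOuter v w i j • u)
    have hz : (fun x => ((g x / 2) • ((w ⬝ᵥ x) • symOuter u v + (v ⬝ᵥ x) • symOuter u w
        - (u ⬝ᵥ x) • symOuter v w)) i j) = g * fun x => z ⬝ᵥ x := by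
      ext x
      simp only [z, Matrix.smul_apply, Matrix.sub_apply, Matrix.add_apply, smul_eq_mul,
        Pi.mul_apply, smul_dotProduct, add_dotProduct, sub_dotProduct]
      ring
    rw [hz, polyDeg_iff_mem_polyFun]
    exact mul_mem_polyFun hg (dotProduct_mem_polyFun z)
  · simp [transpose_smul, transpose_add, transpose_sub, symOuter_transpose]
  · ext x : 1
    simp only [smul_mulVec, sub_mulVec, add_mulVec, symOuter_mulVec]
    module

lemma dotProduct_smul_eq_symOuter_mulVec_add_cross (u v x : V3) :
    (v ⬝ᵥ x) • u = ((2⁻¹ : ℝ) • symOuter u v) *ᵥ x + ((2⁻¹ : ℝ) • (v ⨯₃ u)) ⨯₃ x := by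
  rw [smul_mulVec, symOuter_mulVec, map_smul, LinearMap.smul_apply,
    cross_cross_eq_smul_sub_smul]
  module

lemma Finsupp.eq_zero_or_exists_eq_single_add {ι : Type*} (d : ι →₀ ℕ) :
    d = 0 ∨ ∃ i d', d = Finsupp.single i 1 + d' := by
  obtain rfl | ⟨i, hi⟩ := eq_or_ne d 0 |>.imp_right Finsupp.ne_iff.mp
  · exact .inl rfl
  · refine .inr ⟨i, d - Finsupp.single i 1, (add_tsub_cancel_of_le ?_).symm⟩
    exact Finsupp.single_le_iff.mpr (Nat.one_le_iff_ne_zero.mpr hi)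

lemma eval_monomial_single_add (x : V3) (s : Fin 3) (d : Fin 3 →₀ ℕ) :
    eval x (monomial (Finsupp.single s 1 + d) 1) = x s * eval x (monomial d 1) := by
  rw [monomial_single_add, pow_one, eval_mul, eval_X]

lemma vcross_eq_cross (a b : V3) : vcross a b = a ⨯₃ b := by
  ext i
  fin_cases i <;> simp [vcross, eps, Fin.sum_univ_three, cross_apply] <;> ring

def rigidMotions : Submodule ℝ (V3 → V3) where
  carrier := {f | ∃ a b : V3, f = fun x => a ⨯₃ x + b}
  zero_mem' := ⟨0, 0, by ext; simp⟩
  add_mem' := by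
    rintro _ _ ⟨a, b, rfl⟩ ⟨a', b', rfl⟩
    refine ⟨a + a', b + b', ?_⟩
    ext x : 1
    simp only [Pi.add_apply, map_add, LinearMap.add_apply]
    abel
  smul_mem' := by
    rintro c _ ⟨a, b, rfl⟩
    exact ⟨c • a, c • b, by ext x : 1; simp⟩

def symmMulSelf : Submodule ℝ (V3 → V3) where
  carrier := {f | ∃ τ : V3 → M3, Continuous τ ∧ (∀ x, (τ x)ᵀ = τ x) ∧ f = fun x => τ x *ᵥ x}
  zero_mem' := ⟨0, continuous_const, by simp, by ext; simp⟩
  add_mem' := by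
    rintro _ _ ⟨τ, hτ, hτs, rfl⟩ ⟨σ, hσ, hσs, rfl⟩
    exact ⟨τ + σ, hτ.add hσ, fun x => by simp [hτs, hσs], by ext x : 1; simp [add_mulVec]⟩
  smul_mem' := by
    rintro c _ ⟨τ, hτ, hτs, rfl⟩
    exact ⟨c • τ, hτ.const_smul c, fun x => by simp [hτs], by ext x : 1; simp [smul_mulVec]⟩

lemma eq_zero_of_mulVec_eq_cross {S : M3} (hS : Sᵀ = S) {a : V3} (h : ∀ v, S *ᵥ v = a ⨯₃ v) :
    a = 0 := by
  have hsymm : ∀ i j, (a ⨯₃ Pi.single j 1) i = (a ⨯₃ Pi.single i 1) j := fun i j => by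
    rw [← h, ← h, mulVec_single_one, mulVec_single_one]
    exact congrFun (congrFun hS j) i
  have h01 := hsymm 0 1
  have h02 := hsymm 0 2
  have h12 := hsymm 1 2
  ext i
  fin_cases i <;> simp [cross_apply] at h01 h02 h12 ⊢ <;> linarith

lemma eq_zero_of_mulVec_self_eq_cross_add {τ : V3 → M3} (hτ : ContinuousAt τ 0)
    (hτs : (τ 0)ᵀ = τ 0) {a b : V3} (h : ∀ x, τ x *ᵥ x = a ⨯₃ x + b) : a = 0 ∧ b = 0 := by
  have hb : b = 0 := by simpa using (h 0).symm
  refine ⟨eq_zero_of_mulVec_eq_cross hτs fun v => ?_, hb⟩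
  set φ : ℝ → V3 := fun t => τ (t • v) *ᵥ v
  have hφ : ContinuousAt φ 0 :=
    ((continuous_id.matrix_mulVec continuous_const).continuousAt (x := τ 0)).comp_of_eq
      (hτ.comp_of_eq (continuous_id.smul continuous_const).continuousAt (zero_smul ℝ v))
      (by simp)
  have hconst : ∀ t ≠ (0 : ℝ), φ t = a ⨯₃ v := fun t ht => by
    have := h (t • v)
    rw [mulVec_smul, map_smul, hb, add_zero] at this
    exact smul_right_injective _ ht this
  have hφ0 : φ 0 = a ⨯₃ v :=
    tendsto_nhds_unique (hφ.tendsto.mono_left (nhdsWithin_le_nhds (s := {0}ᶜ)))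
      (tendsto_const_nhds.congr' (eventually_nhdsWithin_of_forall (hconst · · |>.symm)))
  simpa [φ] using hφ0

lemma symmMulSelf_inf_rigidMotions : symmMulSelf ⊓ rigidMotions = ⊥ := by
  rw [eq_bot_iff]
  rintro _ ⟨⟨τ, hτ, hτs, rfl⟩, ⟨a, b, hab⟩⟩
  obtain ⟨rfl, rfl⟩ := eq_zero_of_mulVec_self_eq_cross_add hτ.continuousAt (hτs 0) (congrFun hab)
  rw [Submodule.mem_bot, hab]
  ext
  simp

def polySymmMulSelf (k : ℕ) : Set (V3 → V3) :=
  {f | ∃ τ : V3 → M3, PolySym k τ ∧ f = fun x => τ x *ᵥ x}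

lemma monomial_smul_single_mem (k : ℕ) {d : Fin 3 →₀ ℕ} (hd : d.degree ≤ k + 1) (r : Fin 3) :
    (fun x => eval x (monomial d 1) • (Pi.single r 1 : V3)) ∈
      Submodule.span ℝ (polySymmMulSelf k) ⊔ rigidMotions := by
  obtain rfl | ⟨s, d, rfl⟩ := d.eq_zero_or_exists_eq_single_add
  · exact Submodule.mem_sup_right ⟨0, Pi.single r 1, by ext; simp⟩
  obtain rfl | ⟨t, d, rfl⟩ := d.eq_zero_or_exists_eq_single_add
  · set τ : M3 := (2⁻¹ : ℝ) • symOuter (Pi.single r 1) (Pi.single s 1)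
    have hτ : PolySym k fun _ => τ := by
      refine ⟨fun i j => polyDeg_iff_mem_polyFun.mpr ?_, fun _ => ?_⟩
      · exact polyFun_mono (Nat.zero_le k) (const_mem_polyFun _)
      · simp [τ, symOuter_transpose]
    have h : (fun x => eval x (monomial (Finsupp.single s 1 + 0) 1) • (Pi.single r 1 : V3)) =
        (fun x => τ *ᵥ x) + fun x => ((2⁻¹ : ℝ) • (Pi.single s 1 ⨯₃ Pi.single r 1)) ⨯₃ x + 0 := by
      ext x : 1
      rw [Pi.add_apply, add_zero, add_zero, ← dotProduct_smul_eq_symOuter_mulVec_add_cross, ← X,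
        eval_X, single_dotProduct, one_mul]
    rw [h]
    exact Submodule.add_mem _ (Submodule.mem_sup_left (Submodule.subset_span ⟨_, hτ, rfl⟩))
      (Submodule.mem_sup_right ⟨_, 0, rfl⟩)
  · obtain ⟨τ, hτ, heq⟩ := exists_polySym_mulVec_eq (monomial_mem_polyFun d)
      (Pi.single r 1) (Pi.single s 1) (Pi.single t 1)
    have hdeg : d.degree + 1 ≤ k := by simp only [map_add, Finsupp.degree_single] at hd; omega
    refine Submodule.mem_sup_left
      (Submodule.subset_span ⟨τ, hτ.mono (by exact_mod_cast hdeg), ?_⟩)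
    rw [← heq]
    ext x : 1
    simp only [eval_monomial_single_add, single_dotProduct, one_mul, ne_eq, Pi.single_eq_zero_iff,
      one_ne_zero, not_false_eq_true, smul_left_inj]
    ring

lemma span_vcross_add_eq_rigidMotions :
    Submodule.span ℝ {f : V3 → V3 | ∃ a b : V3, f = fun x => vcross a x + b} = rigidMotions := by
  simp only [vcross_eq_cross]
  exact Submodule.span_eq rigidMotions

lemma span_polySymmMulSelf_le_symmMulSelf (k : ℕ) :
    Submodule.span ℝ (polySymmMulSelf k) ≤ symmMulSelf :=
  Submodule.span_le.mpr fun _ ⟨τ, hτ, hf⟩ => ⟨τ, hτ.continuous, hτ.2, hf⟩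

lemma span_polyVec_le_sup (k : ℕ) :
    Submodule.span ℝ {f | PolyVec ((k : ℤ) + 1) f} ≤
      Submodule.span ℝ (polySymmMulSelf k) ⊔ rigidMotions :=
  Submodule.span_le.mpr fun _ hf =>
    PolyVec.mem_of_monomial_smul_single_mem (fun _ r hd => monomial_smul_single_mem k hd r)
      (by exact_mod_cast hf)

lemma sup_le_span_polyVec (k : ℕ) :
    Submodule.span ℝ (polySymmMulSelf k) ⊔ rigidMotions ≤
      Submodule.span ℝ {f | PolyVec ((k : ℤ) + 1) f} := by
  refine sup_le (Submodule.span_mono ?_) ?_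
  · rintro _ ⟨τ, hτ, rfl⟩
    exact_mod_cast polyVec_mulVec_self hτ
  · rintro _ ⟨a, b, rfl⟩
    exact Submodule.subset_span (by exact_mod_cast polyVec_cross_add k a b)

/-- `P_{k+1}(ℝ³;ℝ³) = {τ·x : τ ∈ P_k(ℝ³;𝕊)} ⊕ RM`. -/
theorem stmt_9 (k : ℕ) :
    (Submodule.span ℝ
        {f : V3 → V3 | ∃ τ : V3 → M3, PolySym k τ ∧ f = fun x => (τ x).mulVec x}) ⊓
      (Submodule.span ℝ {f : V3 → V3 | ∃ a b : V3, f = fun x => vcross a x + b}) = ⊥ ∧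
    (Submodule.span ℝ
        {f : V3 → V3 | ∃ τ : V3 → M3, PolySym k τ ∧ f = fun x => (τ x).mulVec x}) ⊔
      (Submodule.span ℝ {f : V3 → V3 | ∃ a b : V3, f = fun x => vcross a x + b})
      = Submodule.span ℝ {f : V3 → V3 | PolyVec ((k : ℤ) + 1) f} := by
  rw [span_vcross_add_eq_rigidMotions]
  refine ⟨eq_bot_iff.mpr ?_, le_antisymm (sup_le_span_polyVec k) (span_polyVec_le_sup k)⟩
  calc Submodule.span ℝ (polySymmMulSelf k) ⊓ rigidMotions
      ≤ symmMulSelf ⊓ rigidMotions := inf_le_inf_right _ (span_polySymmMulSelf_le_symmMulSelf k)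
    _ = ⊥ := symmMulSelf_inf_rigidMotions
end
end

section
/- Let n ∈ ℝ³ be a unit vector. For every three-times continuously differentiable symmetric matrix field τ : ℝ³ → 𝕊, one has pointwise on ℝ³: n·(inc τ)·n = div_F div_F( n×τ×n ), where n·A·n := Σ_{i,j} n_i A_{ij} n_j. -/
open Matrix

noncomputable section

/-- The tangential projection matrix `Π_F = I - n nᵀ`. -/
def PF (n : V3) : M3 := 1 - Matrix.vecMulVec n n

/-- Tangential derivative `(∇_F)_i f = Σ_k (Π_F)_{ik} ∂_k f`. -/
def dF (n : V3) (i : Fin 3) (f : V3 → ℝ) : V3 → ℝ :=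
  fun x => ∑ k, PF n i k * pd k f x

/-- `(∇_F^⊥)_i f = Σ_{k,l} ε_{ikl} n_k ∂_l f`. -/
def dFperp (n : V3) (i : Fin 3) (f : V3 → ℝ) : V3 → ℝ :=
  fun x => ∑ k, ∑ l, eps i k l * n k * pd l f x

/-- `(∇_F w)_{ij} = (∇_F)_i w_j`. -/
def gradF (n : V3) (w : V3 → V3) : V3 → M3 :=
  fun x => Matrix.of fun i j => dF n i (fun y => w y j) x

/-- First trace for the `inc` operator: `tr₁(τ) = n×τ×n`. -/
def tr1 (n : V3) (τ : V3 → M3) : V3 → M3 :=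
  fun x => bCrossA n (aCrossB (τ x) n)

/-- Second trace for the `inc` operator:
`tr₂(τ) = sym( n×(∇×τ)·Π_F + ∇_F(n·τ·Π_F) )`. -/
def tr2 (n : V3) (τ : V3 → M3) : V3 → M3 :=
  fun x => symMat (bCrossA n (colCurl τ x) * PF n
    + gradF n (fun y => Matrix.vecMul (Matrix.vecMul n (τ y)) (PF n)) x)


/-!
Let `W` be the matrix of `v ↦ v × n`. Unfolding the two curls gives
`n·(inc τ)·n = div div (W τ W)`, while `n×τ×n = W τ W`. Moreover
`div_F div_F σ = div div (Π_F σ Π_F)`, and since `W n = 0 = nᵀ W` the projections are absorbed: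
`Π_F (W τ W) Π_F = W τ W`.
-/

lemma eps_cyclic (i j k : Fin 3) : eps j k i = eps i j k := by
  fin_cases i <;> fin_cases j <;> fin_cases k <;> norm_num [eps]

lemma eps_swap_right (i j k : Fin 3) : eps i k j = -eps i j k := by
  fin_cases i <;> fin_cases j <;> fin_cases k <;> norm_num [eps]

/-- The matrix of `v ↦ v × n`. -/
def crossMatrix (n : V3) : M3 := Matrix.of fun a t => ∑ i, n i * eps i a t

lemma crossMatrix_apply (n : V3) (a t : Fin 3) : crossMatrix n a t = ∑ i, n i * eps i a t := rfl

lemma crossMatrix_transpose (n : V3) : (crossMatrix n)ᵀ = -crossMatrix n := by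
  ext a t
  simp only [transpose_apply, Matrix.neg_apply, crossMatrix_apply, ← Finset.sum_neg_distrib,
    ← mul_neg, ← eps_swap_right]

lemma crossMatrix_mulVec_self (n : V3) : crossMatrix n *ᵥ n = 0 := by
  ext a
  simp only [crossMatrix, mulVec, dotProduct, of_apply, Fin.sum_univ_three, Pi.zero_apply]
  fin_cases a <;> norm_num [eps] <;> ring

lemma vecMul_crossMatrix_self (n : V3) : n ᵥ* crossMatrix n = 0 := by
  ext a
  simp only [crossMatrix, vecMul, dotProduct, of_apply, Fin.sum_univ_three, Pi.zero_apply]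
  fin_cases a <;> norm_num [eps] <;> ring

lemma PF_transpose (n : V3) : (PF n)ᵀ = PF n := by
  rw [PF, transpose_sub, transpose_one, transpose_vecMulVec]

lemma PF_comm (n : V3) (i j : Fin 3) : PF n i j = PF n j i := by
  rw [← PF_transpose n, transpose_apply, PF_transpose]

lemma crossMatrix_mul_PF (n : V3) : crossMatrix n * PF n = crossMatrix n := by
  rw [PF, Matrix.mul_sub, Matrix.mul_one, mul_vecMulVec, crossMatrix_mulVec_self, zero_vecMulVec,
    sub_zero]

lemma PF_mul_crossMatrix (n : V3) : PF n * crossMatrix n = crossMatrix n := by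
  rw [PF, Matrix.sub_mul, Matrix.one_mul, vecMulVec_mul, vecMul_crossMatrix_self, vecMulVec_zero,
    sub_zero]

lemma tr1_eq (n : V3) (τ : V3 → M3) (y : V3) :
    tr1 n τ y = crossMatrix n * τ y * crossMatrix n := by
  suffices tr1 n τ y = (crossMatrix n)ᵀ * τ y * (crossMatrix n)ᵀ by
    simpa only [crossMatrix_transpose, neg_mul, mul_neg, neg_neg] using this
  ext i j
  simp only [tr1, bCrossA, aCrossB, crossMatrix, of_apply, transpose_apply, mul_apply,
    Finset.mul_sum, Finset.sum_mul, ← eps_cyclic i, eps_cyclic (j := j)]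
  simp only [Fin.sum_univ_three]
  ring

lemma PF_mul_tr1_mul_PF (n : V3) (τ : V3 → M3) (y : V3) :
    PF n * tr1 n τ y * PF n = tr1 n τ y := by
  simp only [tr1_eq, Matrix.mul_assoc, crossMatrix_mul_PF]
  rw [← Matrix.mul_assoc (PF n), PF_mul_crossMatrix]

section pd

variable {k : Fin 3}

lemma pd_sum {ι : Type*} (s : Finset ι) {f : ι → V3 → ℝ}
    (hf : ∀ i ∈ s, Differentiable ℝ (f i)) :
    pd k (fun y => ∑ i ∈ s, f i y) = fun x => ∑ i ∈ s, pd k (f i) x := by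
  ext x
  simp [pd, fderiv_fun_sum fun i hi => hf i hi x]

lemma pd_const_mul (c : ℝ) {f : V3 → ℝ} (hf : Differentiable ℝ f) :
    pd k (fun y => c * f y) = fun x => c * pd k f x := by
  ext x
  simp [pd, fderiv_const_mul (hf x) c]

lemma pd_mul_const (c : ℝ) {f : V3 → ℝ} (hf : Differentiable ℝ f) :
    pd k (fun y => f y * c) = fun x => pd k f x * c := by
  simp only [mul_comm _ c, pd_const_mul c hf]

lemma ContDiff.differentiable_pd {f : V3 → ℝ} (h : ContDiff ℝ 2 f) (a : Fin 3) :
    Differentiable ℝ (pd a f) :=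
  ((h.fderiv_right one_add_one_eq_two.le).clm_apply contDiff_const).differentiable one_ne_zero

end pd

lemma dF_eq (n : V3) (i : Fin 3) (f : V3 → ℝ) :
    dF n i f = fun x => ∑ k, PF n i k * pd k f x := rfl

lemma sum_dF_dF (n : V3) {σ : V3 → M3} (hσ : ∀ i j, ContDiff ℝ 2 (σ · i j)) (x : V3) :
    ∑ i, ∑ j, dF n i (dF n j (σ · i j)) x
      = ∑ a, ∑ b, pd a (pd b (fun y => (PF n * σ y * PF n) a b)) x := by
  have hσ₁ : ∀ i j, Differentiable ℝ (σ · i j) :=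
    fun i j => (hσ i j).differentiable (by norm_num)
  have hpdσ : ∀ b i j, Differentiable ℝ (pd b (σ · i j)) :=
    fun b i j => (hσ i j).differentiable_pd b
  simp only [dF_eq, mul_apply]
  simp (disch := fun_prop) only [pd_sum, pd_const_mul, pd_mul_const]
  simp only [Fin.sum_univ_three, PF_comm n 1 0, PF_comm n 2 0, PF_comm n 2 1]
  ring

lemma rowCurl_mulVec (n : V3) {A : V3 → M3} (hA : ∀ i j, Differentiable ℝ (A · i j)) (x : V3) :
    rowCurl A x *ᵥ n = divRow (fun y => A y * crossMatrix n) x := by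
  ext t
  simp only [rowCurl, divRow, crossMatrix, mulVec, dotProduct, of_apply, mul_apply]
  simp (disch := fun_prop) only [pd_sum, pd_mul_const]
  simp only [Fin.sum_univ_three]
  ring

lemma mulVec_divRow (C : M3) {A : V3 → M3} (hA : ∀ i j, Differentiable ℝ (A · i j)) (x : V3) :
    C *ᵥ divRow A x = divRow (fun y => C * A y) x := by
  ext s
  simp only [divRow, mulVec, dotProduct, mul_apply]
  simp (disch := fun_prop) only [pd_sum, pd_const_mul]
  simp only [Finset.mul_sum]
  exact Finset.sum_comm

lemma dotProduct_colCurl_mulVec (n : V3) {B : V3 → M3} (hB : ∀ i j, Differentiable ℝ (B · i j))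
    (x : V3) :
    n ⬝ᵥ colCurl B x *ᵥ n = ∑ s, pd s (fun y => (crossMatrix n *ᵥ (B y *ᵥ n)) s) x := by
  simp only [colCurl, crossMatrix, mulVec, dotProduct, of_apply]
  simp (disch := fun_prop) only [pd_sum, pd_const_mul, pd_mul_const]
  simp only [Fin.sum_univ_three]
  ring

lemma dotProduct_incOp_mulVec (n : V3) {τ : V3 → M3} (hτ : ∀ i j, ContDiff ℝ 2 (τ · i j))
    (x : V3) :
    n ⬝ᵥ incOp τ x *ᵥ n
      = ∑ a, ∑ b, pd a (pd b (fun y => (crossMatrix n * τ y * crossMatrix n) a b)) x := by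
  have hτ₁ : ∀ i j, Differentiable ℝ (τ · i j) :=
    fun i j => (hτ i j).differentiable (by norm_num)
  have hpdτ : ∀ b i j, Differentiable ℝ (pd b (τ · i j)) :=
    fun b i j => (hτ i j).differentiable_pd b
  have hrowCurl : ∀ i j, Differentiable ℝ (rowCurl τ · i j) := by
    intro i j
    simp only [rowCurl, of_apply]
    fun_prop
  have hτW : ∀ i j, Differentiable ℝ (fun y => (τ y * crossMatrix n) i j) := by
    intro i j
    simp only [mul_apply]
    fun_prop
  have hpdWτW : ∀ b i j,
      Differentiable ℝ (pd b fun y => (crossMatrix n * (τ y * crossMatrix n)) i j) := by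
    intro b i j
    refine ContDiff.differentiable_pd ?_ b
    simp only [mul_apply]
    fun_prop
  rw [incOp, dotProduct_colCurl_mulVec n hrowCurl]
  simp only [rowCurl_mulVec n hτ₁, mulVec_divRow _ hτW, divRow, Matrix.mul_assoc]
  simp (disch := fun_prop) only [pd_sum]

theorem stmt_15_general (n : V3) (τ : V3 → M3)
    (hτ : ∀ i j, ContDiff ℝ 3 fun x => τ x i j) :
    ∀ x, n ⬝ᵥ (incOp τ x).mulVec n
      = ∑ i, ∑ j, dF n i (dF n j fun y => tr1 n τ y i j) x := by
  have hτ₂ : ∀ i j, ContDiff ℝ 2 (τ · i j) := fun i j => (hτ i j).of_le (by norm_num)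
  have htr1 : ∀ i j, ContDiff ℝ 2 (tr1 n τ · i j) := by
    intro i j
    simp only [tr1_eq, mul_apply]
    fun_prop
  intro x
  rw [dotProduct_incOp_mulVec n hτ₂, sum_dF_dF n htr1]
  simp_rw [PF_mul_tr1_mul_PF, tr1_eq]

/-- `n·(inc τ)·n = div_F div_F (n×τ×n)`. -/
theorem stmt_15 (n : V3) (hn : ∑ i, n i * n i = 1)
    (τ : V3 → M3) (hτsym : ∀ x, (τ x)ᵀ = τ x)
    (hτ : ∀ i j, ContDiff ℝ 3 fun x => τ x i j) :
    ∀ x, n ⬝ᵥ (incOp τ x).mulVec n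
      = ∑ i, ∑ j, dF n i (dF n j fun y => tr1 n τ y i j) x :=
  stmt_15_general n τ hτ
end
end
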